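/- arXiv:0908.1843 — 3 statements merged into one kernel-verified Lean document; each statement's English description precedes it below -/
import Mathlib

section
/- Let E be a module over the ring L⁰(F,ℝ) of equivalence classes of real-valued random variables on a probability space (Ω,F,P), let f : E → L⁰(F,ℝ) be an ℝ-linear map and p : E → L⁰(F,ℝ) satisfy p(ξx) = ξp(x) for all ξ ∈ L⁰₊ and p(x+y) ≤ p(x)+p(y). If f(x) ≤ p(x) for all x ∈ E, then f is L⁰(F,ℝ)-linear, i.e., f(ξx) = ξ f(x) for all ξ ∈ L⁰(F,ℝ) and x ∈ E. -/
/-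
With `D η := f (η • x) - η * f x`, splitting `η` into positive and negative parts and using
the domination by the `L⁰`-sublinear `p` gives the pointwise bound
`|D η| ≤ |η| * C` with `C = |p x| + |p (-x)| + |f x|`. Since `D` is additive and vanishes on
real constants, `D ξ = D (ξ - q)` is bounded by `|ξ - q| * C` for every rational `q`; as there
are only countably many of them, these bounds hold simultaneously almost everywhere, and density
of `ℚ` forces `D ξ = 0`.
-/

open MeasureTheory

variable {Ω : Type*} [MeasurableSpace Ω] {μ : MeasureTheory.Measure Ω}

/-- `L⁰(F,𝕜)`, the space `Ω →ₘ[μ] 𝕜` of equivalence classes of `𝕜`-valued random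
variables, is a commutative ring under the pointwise operations. -/
noncomputable instance L0.instCommRing {𝕜 : Type*} [RCLike 𝕜] : CommRing (Ω →ₘ[μ] 𝕜) :=
  { (inferInstance : AddCommGroup (Ω →ₘ[μ] 𝕜)),
    (inferInstance : CommMonoid (Ω →ₘ[μ] 𝕜)) with
    left_distrib := fun f g h => AEEqFun.toGerm_injective <| by
      simp only [AEEqFun.mul_toGerm, AEEqFun.add_toGerm, mul_add]
    right_distrib := fun f g h => AEEqFun.toGerm_injective <| by
      simp only [AEEqFun.mul_toGerm, AEEqFun.add_toGerm, add_mul]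
    zero_mul := fun f => AEEqFun.toGerm_injective <| by
      simp only [AEEqFun.mul_toGerm, AEEqFun.zero_toGerm, zero_mul]
    mul_zero := fun f => AEEqFun.toGerm_injective <| by
      simp only [AEEqFun.mul_toGerm, AEEqFun.zero_toGerm, mul_zero] }

lemma eq_zero_of_forall_rat_abs_le_abs_sub_mul {a t C : ℝ} (h : ∀ q : ℚ, |a| ≤ |t - q| * C) :
    a = 0 := by
  have : |a| ≤ |t - t| * C :=
    Rat.denseRange_cast.induction_on (p := fun s ↦ |a| ≤ |t - s| * C) t
      (isClosed_le continuous_const (by fun_prop)) h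
  simpa using this

lemma max_mul_add_max_neg_mul_le (a u v : ℝ) :
    max a 0 * u + max (-a) 0 * v ≤ |a| * (|u| + |v|) := by
  rcases le_total 0 a with ha | ha
  · rw [max_eq_left ha, max_eq_right (neg_nonpos.2 ha), abs_of_nonneg ha]
    nlinarith [le_abs_self u, abs_nonneg v]
  · rw [max_eq_right ha, max_eq_left (neg_nonneg.2 ha), abs_of_nonpos ha]
    nlinarith [le_abs_self v, abs_nonneg u]

namespace MeasureTheory.AEEqFun

instance instIsScalarTowerSelf {𝕜 γ : Type*} [TopologicalSpace γ] [Mul γ] [ContinuousMul γ]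
    [SMul 𝕜 γ] [ContinuousConstSMul 𝕜 γ] [IsScalarTower 𝕜 γ γ] :
    IsScalarTower 𝕜 (Ω →ₘ[μ] γ) (Ω →ₘ[μ] γ) :=
  ⟨fun c f g ↦ induction_on₂ f g fun f _ g _ ↦ by
    simp only [smul_eq_mul, smul_mk, mk_mul_mk, smul_mul_assoc]⟩

lemma eq_zero_of_forall_rat_ae_abs_le_abs_sub_mul {g : Ω →ₘ[μ] ℝ} {t C : Ω → ℝ}
    (h : ∀ q : ℚ, ∀ᵐ ω ∂μ, |g ω| ≤ |t ω - q| * C ω) : g = 0 := by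
  refine ext ?_
  filter_upwards [ae_all_iff.2 h, coeFn_zero (β := ℝ)] with ω hω h0
  rw [h0]
  exact eq_zero_of_forall_rat_abs_le_abs_sub_mul hω

lemma posPart_nonneg {γ : Type*} [TopologicalSpace γ] [LinearOrder γ] [Zero γ]
    [OrderClosedTopology γ] (f : Ω →ₘ[μ] γ) : 0 ≤ f.posPart := by
  refine coeFn_le.1 ?_
  filter_upwards [coeFn_posPart f, coeFn_zero (β := γ)] with ω h h0
  rw [h, h0]
  exact le_max_right _ _

lemma posPart_sub_posPart_neg {γ : Type*} [TopologicalSpace γ] [AddCommGroup γ] [LinearOrder γ]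
    [IsOrderedAddMonoid γ] [OrderClosedTopology γ] [IsTopologicalAddGroup γ]
    (f : Ω →ₘ[μ] γ) : f.posPart - (-f).posPart = f := by
  refine ext ?_
  filter_upwards [coeFn_sub f.posPart (-f).posPart, coeFn_posPart f, coeFn_posPart (-f),
    coeFn_neg f] with ω h hp hn hneg
  rw [h, Pi.sub_apply, hp, hn, hneg, Pi.neg_apply, max_zero_sub_max_neg_zero_eq_self]

end MeasureTheory.AEEqFun

section Dominated

variable {E : Type*} [AddCommGroup E] [Module (Ω →ₘ[μ] ℝ) E]

open AEEqFun

structure IsL0Sublinear (p : E → Ω →ₘ[μ] ℝ) : Prop where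
  map_smul_of_nonneg : ∀ ξ : Ω →ₘ[μ] ℝ, 0 ≤ ξ → ∀ x : E, p (ξ • x) = ξ * p x
  map_add_le : ∀ x y : E, p (x + y) ≤ p x + p y

lemma le_posPart_mul_add_posPart_neg_mul {f p : E → Ω →ₘ[μ] ℝ}
    (hp : IsL0Sublinear p) (hfp : ∀ x : E, f x ≤ p x) (η : Ω →ₘ[μ] ℝ) (x : E) :
    f (η • x) ≤ η.posPart * p x + (-η).posPart * p (-x) := by
  have hsplit : η • x = η.posPart • x + (-η).posPart • (-x) := by
    rw [smul_neg, ← sub_eq_add_neg, ← sub_smul, posPart_sub_posPart_neg]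
  calc f (η • x) ≤ p (η.posPart • x + (-η).posPart • (-x)) := hsplit ▸ hfp _
    _ ≤ p (η.posPart • x) + p ((-η).posPart • (-x)) := hp.map_add_le _ _
    _ = η.posPart * p x + (-η).posPart * p (-x) := by
      rw [hp.map_smul_of_nonneg _ η.posPart_nonneg, hp.map_smul_of_nonneg _ (-η).posPart_nonneg]

lemma ae_apply_smul_le_abs_mul {f p : E → Ω →ₘ[μ] ℝ}
    (hp : IsL0Sublinear p) (hfp : ∀ x : E, f x ≤ p x) (η : Ω →ₘ[μ] ℝ) (x : E) :
    ∀ᵐ ω ∂μ, f (η • x) ω ≤ |η ω| * (|p x ω| + |p (-x) ω|) := by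
  filter_upwards [coeFn_le.2 (le_posPart_mul_add_posPart_neg_mul hp hfp η x),
    coeFn_add (η.posPart * p x) ((-η).posPart * p (-x)), coeFn_mul η.posPart (p x),
    coeFn_mul (-η).posPart (p (-x)), coeFn_posPart η, coeFn_posPart (-η), coeFn_neg η]
    with ω hle hadd hmul hmul' hpos hpos' hneg
  rw [hadd, Pi.add_apply, hmul, hmul', Pi.mul_apply, Pi.mul_apply, hpos, hpos', hneg,
    Pi.neg_apply] at hle
  exact hle.trans (max_mul_add_max_neg_mul_le _ _ _)

lemma ae_abs_apply_smul_sub_mul_le {f : E →+ Ω →ₘ[μ] ℝ} {p : E → Ω →ₘ[μ] ℝ}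
    (hp : IsL0Sublinear p) (hfp : ∀ x : E, f x ≤ p x) (η : Ω →ₘ[μ] ℝ) (x : E) :
    ∀ᵐ ω ∂μ, |(f (η • x) - η * f x) ω| ≤ |η ω| * (|p x ω| + |p (-x) ω| + |f x ω|) := by
  have hneg : f ((-η) • x) = -f (η • x) := by rw [neg_smul, map_neg]
  filter_upwards [ae_apply_smul_le_abs_mul hp hfp η x,
    ae_apply_smul_le_abs_mul hp hfp (-η) x, coeFn_neg η, coeFn_neg (f (η • x)),
    coeFn_sub (f (η • x)) (η * f x), coeFn_mul η (f x)] with ω hle hle' hη hf hsub hmul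
  rw [hneg, hf, hη, Pi.neg_apply, Pi.neg_apply, abs_neg] at hle'
  rw [hsub, Pi.sub_apply, hmul, Pi.mul_apply, abs_le]
  have hprod := abs_mul (η ω) (f x ω)
  constructor <;> nlinarith [neg_abs_le (η ω * f x ω), le_abs_self (η ω * f x ω)]

end Dominated

theorem l0_linearity_of_dominated_general {Ω : Type*} [MeasurableSpace Ω] (μ : Measure Ω)
    (E : Type*) [AddCommGroup E] [Module (Ω →ₘ[μ] ℝ) E]
    (f p : E → Ω →ₘ[μ] ℝ)
    -- `f` is `ℝ`-linear (the scalar `a : ℝ` acts on `E` through `a • 1 ∈ L⁰(F,ℝ)`):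
    (hf_add : ∀ x y : E, f (x + y) = f x + f y)
    (hf_smul : ∀ (a : ℝ) (x : E), f ((a • (1 : Ω →ₘ[μ] ℝ)) • x) = a • f x)
    -- `p` is `L⁰`-sublinear:
    (hp_smul : ∀ ξ : Ω →ₘ[μ] ℝ, 0 ≤ ξ → ∀ x : E, p (ξ • x) = ξ * p x)
    (hp_add : ∀ x y : E, p (x + y) ≤ p x + p y)
    -- `f` is dominated by `p`:
    (hfp : ∀ x : E, f x ≤ p x) :
    ∀ (ξ : Ω →ₘ[μ] ℝ) (x : E), f (ξ • x) = ξ * f x := by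
  intro ξ x
  let F : E →+ Ω →ₘ[μ] ℝ := AddMonoidHom.mk' f hf_add
  have hp : IsL0Sublinear p := ⟨hp_smul, hp_add⟩
  have hshift (q : ℚ) :
      f (ξ • x) - ξ * f x = F ((ξ - (q : ℝ) • 1) • x) - (ξ - (q : ℝ) • 1) * F x := by
    simp only [F, AddMonoidHom.mk'_apply, sub_smul, map_sub, hf_smul, sub_mul, smul_one_mul]
    abel
  refine sub_eq_zero.1 (AEEqFun.eq_zero_of_forall_rat_ae_abs_le_abs_sub_mul (t := ξ)
    (C := fun ω ↦ |p x ω| + |p (-x) ω| + |f x ω|) fun q ↦ ?_)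
  filter_upwards [ae_abs_apply_smul_sub_mul_le (f := F) hp hfp (ξ - (q : ℝ) • 1) x,
    AEEqFun.coeFn_sub ξ ((q : ℝ) • 1), AEEqFun.coeFn_smul (q : ℝ) (1 : Ω →ₘ[μ] ℝ),
    AEEqFun.coeFn_one (β := ℝ)]
    with ω hle hsub hsmul hone
  rw [hsub, Pi.sub_apply, hsmul, Pi.smul_apply, hone, Pi.one_apply, smul_eq_mul, mul_one] at hle
  rwa [hshift q]

/-- **Lemma 2.7 (real case).** Let `E` be a module over the ring `L⁰(F,ℝ)`, `f : E → L⁰(F,ℝ)`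
an `ℝ`-linear map and `p : E → L⁰(F,ℝ)` an `L⁰`-sublinear function dominating `f`.
Then `f` is `L⁰(F,ℝ)`-linear. -/
theorem l0_linearity_of_dominated {Ω : Type*} [MeasurableSpace Ω] (μ : Measure Ω)
    [IsProbabilityMeasure μ] (E : Type*) [AddCommGroup E] [Module (Ω →ₘ[μ] ℝ) E]
    (f p : E → Ω →ₘ[μ] ℝ)
    -- `f` is `ℝ`-linear (the scalar `a : ℝ` acts on `E` through `a • 1 ∈ L⁰(F,ℝ)`):
    (hf_add : ∀ x y : E, f (x + y) = f x + f y)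
    (hf_smul : ∀ (a : ℝ) (x : E), f ((a • (1 : Ω →ₘ[μ] ℝ)) • x) = a • f x)
    -- `p` is `L⁰`-sublinear:
    (hp_smul : ∀ ξ : Ω →ₘ[μ] ℝ, 0 ≤ ξ → ∀ x : E, p (ξ • x) = ξ * p x)
    (hp_add : ∀ x y : E, p (x + y) ≤ p x + p y)
    -- `f` is dominated by `p`:
    (hfp : ∀ x : E, f x ≤ p x) :
    ∀ (ξ : Ω →ₘ[μ] ℝ) (x : E), f (ξ • x) = ξ * f x :=
  l0_linearity_of_dominated_general μ E f p hf_add hf_smul hp_smul hp_add hfp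
end

section
/- Let E be a real linear space, M ⊆ E a linear subspace, p : E → L⁰(F,ℝ) a random sublinear functional (p(αx)=αp(x) for α ≥ 0 real, p(x+y) ≤ p(x)+p(y)), and f : M → L⁰(F,ℝ) a real linear map with f(x) ≤ p(x) for all x ∈ M. Then there exists a real linear map g : E → L⁰(F,ℝ) extending f with g(x) ≤ p(x) for all x ∈ E. -/
/-!
The Zorn's-lemma proof of Hahn–Banach goes through for any Dedekind complete ordered real
vector space of values: to extend `f` past `x₀` one needs some `c` with
`f y - p (y - x₀) ≤ c ≤ p (z + x₀) - f z` for all `y, z`, and the supremum of the left-hand sides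
is such a `c`.

`L⁰` over a probability space is Dedekind complete. Given `S` bounded above, the functional
`f ↦ ∫ arctan ∘ f` is strictly monotone, bounded and continuous along a.e. convergent sequences.
Along an increasing sequence in the sup-closure of `S` on which it approaches its supremum, the
a.e. limit `g` realises that supremum; then `∫ arctan ∘ (f ⊔ g) ≤ ∫ arctan ∘ g` forces `f ≤ g`
for every `f ∈ S`.
-/

open MeasureTheory

variable {Ω : Type*} [MeasurableSpace Ω] {μ : MeasureTheory.Measure Ω}

theorem Real.norm_arctan_le (x : ℝ) : ‖Real.arctan x‖ ≤ Real.pi / 2 :=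
  abs_le.2 ⟨(Real.arctan_mem_Ioo x).1.le, (Real.arctan_mem_Ioo x).2.le⟩

open Filter Topology in
theorem SupClosed.exists_monotone_tendsto_sSup_image {α : Type*} [SemilatticeSup α] {T : Set α}
    (hT : SupClosed T) (hne : T.Nonempty) {Φ : α → ℝ} (hΦ : Monotone Φ)
    (hbdd : BddAbove (Φ '' T)) :
    ∃ h : ℕ → α, Monotone h ∧ (∀ n, h n ∈ T) ∧
      Tendsto (fun n ↦ Φ (h n)) atTop (𝓝 (sSup (Φ '' T))) := by
  obtain ⟨u, -, hu, huT⟩ := exists_seq_tendsto_sSup (hne.image Φ) hbdd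
  choose t htT hΦt using huT
  have hsupT (n : ℕ) : partialSups t n ∈ T :=
    hT.finsetSup'_mem Finset.nonempty_Iic fun i _ ↦ htT i
  refine ⟨partialSups t, (partialSups t).monotone, hsupT,
    tendsto_of_tendsto_of_tendsto_of_le_of_le hu tendsto_const_nhds
      (fun n ↦ hΦt n ▸ hΦ (le_partialSups t n)) fun n ↦ le_csSup hbdd ⟨_, hsupT n, rfl⟩⟩

namespace MeasureTheory.AEEqFun

open Filter Real Set Topology

variable {β : Type*} [TopologicalSpace β]

instance [AddCommMonoid β] [PartialOrder β] [IsOrderedAddMonoid β] [ContinuousAdd β] :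
    IsOrderedAddMonoid (Ω →ₘ[μ] β) where
  add_le_add_left f g hfg h := by
    rw [← coeFn_le] at hfg ⊢
    filter_upwards [hfg, coeFn_add f h, coeFn_add g h] with ω hω hf hg
    simpa only [hf, hg, Pi.add_apply] using add_le_add_left hω (h ω)

instance {𝕜 : Type*} [Zero 𝕜] [Preorder 𝕜] [Preorder β] [SMul 𝕜 β] [ContinuousConstSMul 𝕜 β]
    [PosSMulMono 𝕜 β] : PosSMulMono 𝕜 (Ω →ₘ[μ] β) where
  smul_le_smul_of_nonneg_left a ha f g hfg := by
    rw [← coeFn_le] at hfg ⊢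
    filter_upwards [hfg, coeFn_smul a f, coeFn_smul a g] with ω hω hf hg
    simpa only [hf, hg, Pi.smul_apply] using smul_le_smul_of_nonneg_left hω ha

theorem exists_isLUB_range_of_monotone {h : ℕ → Ω →ₘ[μ] ℝ} (hmono : Monotone h)
    (hbdd : BddAbove (range h)) :
    ∃ g : Ω →ₘ[μ] ℝ, IsLUB (range h) g ∧
      ∀ᵐ ω ∂μ, Tendsto (fun n ↦ h n ω) atTop (𝓝 (g ω)) := by
  obtain ⟨b, hb⟩ := hbdd
  have hmono_ae : ∀ᵐ ω ∂μ, Monotone fun n ↦ h n ω := by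
    filter_upwards [ae_all_iff.2 fun n ↦ coeFn_le.2 (hmono (Nat.le_succ n))] with ω hω
    exact monotone_nat_of_le_succ hω
  have hbdd_ae : ∀ᵐ ω ∂μ, BddAbove (range fun n ↦ h n ω) := by
    filter_upwards [ae_all_iff.2 fun n ↦ coeFn_le.2 (hb (mem_range_self n))] with ω hω
    exact ⟨b ω, forall_mem_range.2 hω⟩
  let g : Ω →ₘ[μ] ℝ :=
    mk (fun ω ↦ ⨆ n, h n ω) (Measurable.iSup fun n ↦ (h n).measurable).aestronglyMeasurable
  have hg : ∀ᵐ ω ∂μ, g ω = ⨆ n, h n ω := coeFn_mk _ _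
  refine ⟨g, ⟨forall_mem_range.2 fun n ↦ ?_, fun b' hb' ↦ ?_⟩, ?_⟩
  · rw [← coeFn_le]
    filter_upwards [hbdd_ae, hg] with ω hω hgω
    exact hgω ▸ le_ciSup hω n
  · rw [← coeFn_le]
    filter_upwards [ae_all_iff.2 fun n ↦ coeFn_le.2 (hb' (mem_range_self n)), hg] with ω hω hgω
    exact hgω ▸ ciSup_le hω
  · filter_upwards [hmono_ae, hbdd_ae, hg] with ω hmonoω hbddω hgω
    exact hgω ▸ tendsto_atTop_ciSup hmonoω hbddω

noncomputable def arctanIntegral (f : Ω →ₘ[μ] ℝ) : ℝ := ∫ ω, arctan (f ω) ∂μ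

variable [IsFiniteMeasure μ]

theorem integrable_arctan_comp (f : Ω →ₘ[μ] ℝ) :
    MeasureTheory.Integrable (fun ω ↦ arctan (f ω)) μ :=
  .of_bound (continuous_arctan.comp_aestronglyMeasurable f.aestronglyMeasurable) (π / 2)
    (ae_of_all _ fun _ ↦ norm_arctan_le _)

theorem strictMono_arctanIntegral : StrictMono (arctanIntegral (μ := μ)) := by
  intro f g hfg
  have hle : (fun ω ↦ arctan (f ω)) ≤ᵐ[μ] fun ω ↦ arctan (g ω) :=
    (coeFn_le.2 hfg.le).mono fun ω hω ↦ arctan_strictMono.monotone hω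
  refine (integral_mono_ae (integrable_arctan_comp f) (integrable_arctan_comp g) hle).lt_of_ne
    fun heq ↦ hfg.ne <| ext ?_
  filter_upwards [(integral_eq_iff_of_ae_le (integrable_arctan_comp f)
    (integrable_arctan_comp g) hle).1 heq] with ω hω
  exact arctan_injective hω

theorem tendsto_arctanIntegral {F : ℕ → Ω →ₘ[μ] ℝ} {f : Ω →ₘ[μ] ℝ}
    (hF : ∀ᵐ ω ∂μ, Tendsto (fun n ↦ F n ω) atTop (𝓝 (f ω))) :
    Tendsto (fun n ↦ arctanIntegral (F n)) atTop (𝓝 (arctanIntegral f)) :=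
  tendsto_integral_of_dominated_convergence (fun _ ↦ π / 2)
    (fun n ↦ (integrable_arctan_comp (F n)).aestronglyMeasurable) (integrable_const _)
    (fun _ ↦ ae_of_all _ fun _ ↦ norm_arctan_le _)
    (hF.mono fun _ hω ↦ (continuous_arctan.tendsto _).comp hω)

theorem exists_isLUB {S : Set (Ω →ₘ[μ] ℝ)} (hne : S.Nonempty) (hbdd : BddAbove S) :
    ∃ g, IsLUB S g := by
  have hbddT : BddAbove (supClosure S) := by rwa [BddAbove, upperBounds_supClosure]
  have hbddΦ := strictMono_arctanIntegral.monotone.map_bddAbove hbddT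
  obtain ⟨h, hmono, hT, hlim⟩ := supClosed_supClosure.exists_monotone_tendsto_sSup_image
    (hne.mono subset_supClosure) strictMono_arctanIntegral.monotone hbddΦ
  obtain ⟨g, hg, hconv⟩ := exists_isLUB_range_of_monotone hmono
    (hbddT.mono (range_subset_iff.2 hT))
  have hΦg : arctanIntegral g = sSup (arctanIntegral '' supClosure S) :=
    tendsto_nhds_unique (tendsto_arctanIntegral hconv) hlim
  refine ⟨g, fun f hf ↦ ?_, fun b hb ↦ hg.2 ?_⟩
  · have hconv_sup : ∀ᵐ ω ∂μ, Tendsto (fun n ↦ (f ⊔ h n) ω) atTop (𝓝 ((f ⊔ g) ω)) := by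
      filter_upwards [hconv, coeFn_sup f g, ae_all_iff.2 fun n ↦ coeFn_sup f (h n)]
        with ω hω hfg hfh
      simpa only [hfg, hfh] using tendsto_const_nhds.sup_nhds hω
    have hΦ : arctanIntegral (f ⊔ g) ≤ arctanIntegral g :=
      hΦg ▸ le_of_tendsto' (tendsto_arctanIntegral hconv_sup) fun n ↦ le_csSup hbddΦ <|
        mem_image_of_mem _ (supClosed_supClosure (subset_supClosure hf) (hT n))
    have hg_eq : g = f ⊔ g :=
      le_sup_right.eq_of_not_lt fun hlt ↦ hΦ.not_gt (strictMono_arctanIntegral hlt)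
    exact hg_eq ▸ le_sup_left
  · rintro _ ⟨n, rfl⟩
    exact (upperBounds_supClosure S ▸ hb) (hT n)

end MeasureTheory.AEEqFun

namespace LinearPMap

variable {E V : Type*} [AddCommGroup E] [Module ℝ E] [AddCommGroup V] [Module ℝ V]
  [PartialOrder V] {N : E → V}

theorem add_smul_le_of_add_le [PosSMulMono ℝ V]
    (N_hom : ∀ c : ℝ, 0 < c → ∀ x, N (c • x) = c • N x)
    (f : E →ₗ.[ℝ] V) {v : E} {d : V} (h : ∀ y : f.domain, f y + d ≤ N (y + v))
    {s : ℝ} (hs : 0 < s) (y : f.domain) : f y + s • d ≤ N (y + s • v) :=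
  calc f y + s • d = s • (f (s⁻¹ • y) + d) := by
        rw [f.map_smul, smul_add, smul_inv_smul₀ hs.ne']
    _ ≤ s • N (↑(s⁻¹ • y) + v) := smul_le_smul_of_nonneg_left (h _) hs.le
    _ = N (y + s • v) := by
        rw [← N_hom s hs, smul_add, Submodule.coe_smul, smul_inv_smul₀ hs.ne']

theorem exists_forall_add_le_and_add_neg_le [IsOrderedAddMonoid V]
    (hV : ∀ S : Set V, S.Nonempty → BddAbove S → ∃ c, IsLUB S c)
    (N_add : ∀ x y, N (x + y) ≤ N x + N y) (f : E →ₗ.[ℝ] V) (hf : ∀ x : f.domain, f x ≤ N x)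
    (x₀ : E) : ∃ c : V, ∀ y : f.domain, f y + c ≤ N (y + x₀) ∧ f y + -c ≤ N (y + -x₀) := by
  have hsep (y z : f.domain) : f y - N (y + -x₀) ≤ N (z + x₀) - f z := by
    rw [sub_le_sub_iff]
    calc f y + f z = f (y + z) := (f.map_add y z).symm
      _ ≤ N ((y + -x₀) + (z + x₀)) := by
        convert hf (y + z) using 2
        push_cast
        abel
      _ ≤ N (z + x₀) + N (y + -x₀) := (N_add _ _).trans_eq (add_comm _ _)
  obtain ⟨c, hc_ub, hc_lub⟩ := hV (Set.range fun y : f.domain ↦ f y - N (y + -x₀))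
    (Set.range_nonempty _) ⟨_, Set.forall_mem_range.2 fun y ↦ hsep y 0⟩
  refine ⟨c, fun y ↦ ⟨?_, ?_⟩⟩
  · have := hc_lub (Set.forall_mem_range.2 fun z ↦ hsep z y)
    rwa [le_sub_iff_add_le'] at this
  · have := hc_ub (Set.mem_range_self y)
    rwa [sub_le_iff_le_add, ← sub_le_iff_le_add', sub_eq_add_neg] at this

theorem supSpanSingleton_apply_le [PosSMulMono ℝ V]
    (N_hom : ∀ c : ℝ, 0 < c → ∀ x, N (c • x) = c • N x)
    (f : E →ₗ.[ℝ] V) (hf : ∀ x : f.domain, f x ≤ N x) {x₀ : E} (hx₀ : x₀ ∉ f.domain) {c : V}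
    (hc : ∀ y : f.domain, f y + c ≤ N (y + x₀) ∧ f y + -c ≤ N (y + -x₀))
    (x : (f.supSpanSingleton x₀ c hx₀).domain) : f.supSpanSingleton x₀ c hx₀ x ≤ N x := by
  obtain ⟨_, hx⟩ := x
  obtain ⟨y, hy, _, hz, rfl⟩ := Submodule.mem_sup.1 hx
  obtain ⟨t, rfl⟩ := Submodule.mem_span_singleton.1 hz
  rw [supSpanSingleton_apply_mk _ _ _ _ _ hy, RingHom.id_apply]
  rcases lt_trichotomy t 0 with ht | rfl | ht
  · simpa only [smul_neg, neg_smul, neg_neg] using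
      add_smul_le_of_add_le N_hom f (fun y ↦ (hc y).2) (neg_pos.2 ht) ⟨y, hy⟩
  · simpa using hf ⟨y, hy⟩
  · exact add_smul_le_of_add_le N_hom f (fun y ↦ (hc y).1) ht ⟨y, hy⟩

theorem exists_gt_forall_le [IsOrderedAddMonoid V] [PosSMulMono ℝ V]
    (hV : ∀ S : Set V, S.Nonempty → BddAbove S → ∃ c, IsLUB S c)
    (N_hom : ∀ c : ℝ, 0 < c → ∀ x, N (c • x) = c • N x) (N_add : ∀ x y, N (x + y) ≤ N x + N y)
    (f : E →ₗ.[ℝ] V) (hf : ∀ x : f.domain, f x ≤ N x) (hdom : f.domain ≠ ⊤) :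
    ∃ g, f < g ∧ ∀ x : g.domain, g x ≤ N x := by
  obtain ⟨x₀, -, hx₀⟩ := SetLike.exists_of_lt (lt_top_iff_ne_top.2 hdom)
  obtain ⟨c, hc⟩ := exists_forall_add_le_and_add_neg_le hV N_add f hf x₀
  refine ⟨f.supSpanSingleton x₀ c hx₀, lt_of_le_of_ne (f.left_le_sup _ _) fun h ↦ hx₀ ?_,
    supSpanSingleton_apply_le N_hom f hf hx₀ hc⟩
  exact h ▸ Submodule.mem_sup_right (Submodule.mem_span_singleton_self x₀)

theorem sSup_apply_le {c : Set (E →ₗ.[ℝ] V)} (hne : c.Nonempty) (hc : DirectedOn (· ≤ ·) c)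
    (h : ∀ f ∈ c, ∀ x : f.domain, f x ≤ N x) (x : (LinearPMap.sSup c hc).domain) :
    LinearPMap.sSup c hc x ≤ N x := by
  obtain ⟨f, hfc, hx⟩ := (mem_domain_sSup_iff hne hc).1 x.2
  simpa only [LinearPMap.sSup_apply hc hfc ⟨x, hx⟩] using h f hfc ⟨x, hx⟩

theorem exists_domain_eq_top_forall_le [IsOrderedAddMonoid V] [PosSMulMono ℝ V]
    (hV : ∀ S : Set V, S.Nonempty → BddAbove S → ∃ c, IsLUB S c)
    (N_hom : ∀ c : ℝ, 0 < c → ∀ x, N (c • x) = c • N x) (N_add : ∀ x y, N (x + y) ≤ N x + N y)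
    (f : E →ₗ.[ℝ] V) (hf : ∀ x : f.domain, f x ≤ N x) :
    ∃ g ≥ f, g.domain = ⊤ ∧ ∀ x : g.domain, g x ≤ N x := by
  obtain ⟨g, hfg, hg, hmax⟩ := zorn_le_nonempty₀ {g : E →ₗ.[ℝ] V | ∀ x : g.domain, g x ≤ N x}
    (fun c hcN hc g hg ↦ ⟨_, sSup_apply_le ⟨g, hg⟩ hc.directedOn fun f hf ↦ hcN hf,
      fun _ ↦ LinearPMap.le_sSup hc.directedOn⟩) f hf
  refine ⟨g, hfg, by_contra fun hdom ↦ ?_, hg⟩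
  obtain ⟨g', hgg', hg'⟩ := exists_gt_forall_le hV N_hom N_add g hg hdom
  exact hgg'.not_ge (hmax hg' hgg'.le)

end LinearPMap

theorem exists_extension_of_le_sublinear_of_exists_isLUB {E V : Type*} [AddCommGroup E]
    [Module ℝ E] [AddCommGroup V] [PartialOrder V] [IsOrderedAddMonoid V] [Module ℝ V]
    [PosSMulMono ℝ V] (hV : ∀ S : Set V, S.Nonempty → BddAbove S → ∃ c, IsLUB S c)
    (f : E →ₗ.[ℝ] V) (N : E → V) (N_hom : ∀ c : ℝ, 0 < c → ∀ x, N (c • x) = c • N x)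
    (N_add : ∀ x y, N (x + y) ≤ N x + N y) (hf : ∀ x : f.domain, f x ≤ N x) :
    ∃ g : E →ₗ[ℝ] V, (∀ x : f.domain, g x = f x) ∧ ∀ x, g x ≤ N x := by
  obtain ⟨⟨_, g⟩, ⟨-, hfg⟩, rfl, hg⟩ :=
    LinearPMap.exists_domain_eq_top_forall_le hV N_hom N_add f hf
  exact ⟨g.comp (LinearMap.id.codRestrict ⊤ fun _ ↦ trivial), fun _ ↦ (hfg rfl).symm,
    fun x ↦ hg ⟨x, trivial⟩⟩

/-- **Theorem 2.1 (Hahn–Banach for random linear functionals, real case).** Let `E` be a real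
linear space, `M ⊆ E` a linear subspace, `p : E → L⁰(F,ℝ)` a random sublinear functional and
`f : M → L⁰(F,ℝ)` a real linear map with `f ≤ p` on `M`. Then `f` extends to a real linear map
`g : E → L⁰(F,ℝ)` with `g ≤ p`. -/
theorem random_hahn_banach_real {Ω : Type*} [MeasurableSpace Ω] (μ : Measure Ω)
    [IsProbabilityMeasure μ] (E : Type*) [AddCommGroup E] [Module ℝ E]
    (M : Submodule ℝ E) (p : E → Ω →ₘ[μ] ℝ)
    (hp_smul : ∀ a : ℝ, 0 ≤ a → ∀ x : E, p (a • x) = a • p x)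
    (hp_add : ∀ x y : E, p (x + y) ≤ p x + p y)
    (f : M →ₗ[ℝ] Ω →ₘ[μ] ℝ)
    (hfp : ∀ m : M, f m ≤ p (m : E)) :
    ∃ g : E →ₗ[ℝ] Ω →ₘ[μ] ℝ,
      (∀ m : M, g (m : E) = f m) ∧ ∀ x : E, g x ≤ p x :=
  exists_extension_of_le_sublinear_of_exists_isLUB (fun _ ↦ AEEqFun.exists_isLUB) ⟨M, f⟩ p
    (fun a ha ↦ hp_smul a ha.le) hp_add hfp
end

section
/- Let E be a module over L⁰(F,K) satisfying the convention that x = y whenever there is a countable measurable partition {Aₙ} of Ω with 1_{Aₙ}·x = 1_{Aₙ}·y for all n. For any module E^# = {f : E → L⁰(F,K) : f is a module homomorphism}, E^# has the countable concatenation property: for any countable measurable partition {Aₙ} of Ω and any sequence {fₙ} in E^#, the function f defined by f(x) = Σₙ 1_{Aₙ}·fₙ(x) belongs to E^# and satisfies 1_{Aₙ}·f = 1_{Aₙ}·fₙ for each n. -/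
open MeasureTheory

variable {Ω : Type*} [MeasurableSpace Ω] {μ : MeasureTheory.Measure Ω}

/-- The indicator function of a measurable set `A`, as an element of `L⁰(F,𝕜)`. -/
noncomputable def L0.ind {Ω : Type*} [MeasurableSpace Ω] (μ : Measure Ω) (𝕜 : Type*)
    [RCLike 𝕜] (A : Set Ω) (_hA : MeasurableSet A) : Ω →ₘ[μ] 𝕜 :=
  AEEqFun.mk (A.indicator fun _ => (1 : 𝕜))
    (stronglyMeasurable_const.indicator _hA).aestronglyMeasurable

/-- A countable measurable partition of `Ω`. -/
structure IsMeasPartition {Ω : Type*} [MeasurableSpace Ω] (A : ℕ → Set Ω) : Prop where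
  meas : ∀ n, MeasurableSet (A n)
  disj : Pairwise (Function.onFun Disjoint A)
  cover : (⋃ n, A n) = Set.univ

/-!
The concatenation of `fₙ` is computed pointwise in `ω`: on `Aₙ` it is `fₙ x`, read off through
the measurable index `ω ↦ n` of the piece containing `ω`. Two elements of `L⁰` agreeing on every
`Aₙ` agree a.e., so this is the only candidate, and the same uniqueness gives its linearity from
that of the `fₙ`.
-/

namespace IsMeasPartition

variable {A : ℕ → Set Ω}

theorem exists_mem (hA : IsMeasPartition A) (ω : Ω) : ∃ n, ω ∈ A n :=
  Set.mem_iUnion.1 (hA.cover ▸ Set.mem_univ ω)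

open Classical in
noncomputable def index (hA : IsMeasPartition A) (ω : Ω) : ℕ :=
  Nat.find (hA.exists_mem ω)

open Classical in
theorem mem_index (hA : IsMeasPartition A) (ω : Ω) : ω ∈ A (hA.index ω) :=
  Nat.find_spec (hA.exists_mem ω)

theorem index_eq_of_mem (hA : IsMeasPartition A) {n : ℕ} {ω : Ω} (h : ω ∈ A n) :
    hA.index ω = n := by
  by_contra hne
  exact Set.disjoint_left.1 (hA.disj hne) (hA.mem_index ω) h

open Classical in
theorem measurable_comp_index {β : Type*} [MeasurableSpace β] (hA : IsMeasPartition A)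
    {f : ℕ → Ω → β} (hf : ∀ n, Measurable (f n)) : Measurable fun ω => f (hA.index ω) ω :=
  Measurable.find (p := fun n ω => ω ∈ A n) hf hA.meas hA.exists_mem

end IsMeasPartition

namespace L0

variable {𝕜 : Type*} [RCLike 𝕜] {A : ℕ → Set Ω}

theorem coeFn_ind_mul {s : Set Ω} (hs : MeasurableSet s) (u : Ω →ₘ[μ] 𝕜) :
    ⇑(L0.ind μ 𝕜 s hs * u) =ᵐ[μ] s.indicator u := by
  filter_upwards [AEEqFun.coeFn_mul (L0.ind μ 𝕜 s hs) u,
    AEEqFun.coeFn_mk (μ := μ) (s.indicator fun _ => (1 : 𝕜))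
      (stronglyMeasurable_const.indicator hs).aestronglyMeasurable]
    with ω hmul hind
  rw [hmul, Pi.mul_apply, L0.ind, hind, ← Set.indicator_mul_left]
  simp only [one_mul]

theorem ext_of_ind_mul_eq (hA : IsMeasPartition A) {u v : Ω →ₘ[μ] 𝕜}
    (h : ∀ n, L0.ind μ 𝕜 (A n) (hA.meas n) * u = L0.ind μ 𝕜 (A n) (hA.meas n) * v) : u = v := by
  have hpiece : ∀ n, (A n).indicator u =ᵐ[μ] (A n).indicator v := fun n =>
    (coeFn_ind_mul (hA.meas n) u).symm.trans <|
      (AEEqFun.ext_iff.1 (h n)).trans (coeFn_ind_mul (hA.meas n) v)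
  refine AEEqFun.ext ?_
  filter_upwards [ae_all_iff.2 hpiece] with ω hω
  obtain ⟨n, hn⟩ := hA.exists_mem ω
  simpa only [Set.indicator_of_mem hn] using hω n

noncomputable def concat (hA : IsMeasPartition A) (u : ℕ → Ω →ₘ[μ] 𝕜) : Ω →ₘ[μ] 𝕜 :=
  AEEqFun.mk (fun ω => u (hA.index ω) ω)
    (hA.measurable_comp_index fun n => (u n).stronglyMeasurable.measurable).aestronglyMeasurable

theorem ind_mul_concat (hA : IsMeasPartition A) (u : ℕ → Ω →ₘ[μ] 𝕜) (n : ℕ) :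
    L0.ind μ 𝕜 (A n) (hA.meas n) * concat hA u = L0.ind μ 𝕜 (A n) (hA.meas n) * u n := by
  refine AEEqFun.ext ?_
  filter_upwards [coeFn_ind_mul (hA.meas n) (concat hA u), coeFn_ind_mul (hA.meas n) (u n),
    AEEqFun.coeFn_mk (μ := μ) (fun ω => u (hA.index ω) ω) _] with ω hconcat hu hmk
  rw [hconcat, hu]
  by_cases hn : ω ∈ A n
  · rw [Set.indicator_of_mem hn, Set.indicator_of_mem hn, concat, hmk, hA.index_eq_of_mem hn]
  · rw [Set.indicator_of_notMem hn, Set.indicator_of_notMem hn]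

theorem eq_concat_iff (hA : IsMeasPartition A) {u : ℕ → Ω →ₘ[μ] 𝕜} {v : Ω →ₘ[μ] 𝕜} :
    v = concat hA u ↔
      ∀ n, L0.ind μ 𝕜 (A n) (hA.meas n) * v = L0.ind μ 𝕜 (A n) (hA.meas n) * u n :=
  ⟨by rintro rfl; exact ind_mul_concat hA u,
    fun h => ext_of_ind_mul_eq hA fun n => by rw [h n, ind_mul_concat]⟩

theorem concat_add (hA : IsMeasPartition A) (u v : ℕ → Ω →ₘ[μ] 𝕜) :
    concat hA (u + v) = concat hA u + concat hA v :=
  ((eq_concat_iff hA).2 fun n => by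
    rw [mul_add, ind_mul_concat, ind_mul_concat, Pi.add_apply, mul_add]).symm

theorem concat_const_mul (hA : IsMeasPartition A) (c : Ω →ₘ[μ] 𝕜) (u : ℕ → Ω →ₘ[μ] 𝕜) :
    concat hA (fun n => c * u n) = c * concat hA u :=
  ((eq_concat_iff hA).2 fun n => by rw [mul_left_comm, ind_mul_concat, mul_left_comm]).symm

variable {E : Type*} [AddCommMonoid E] [Module (Ω →ₘ[μ] 𝕜) E]

noncomputable def concatLinearMap (hA : IsMeasPartition A)
    (f : ℕ → E →ₗ[Ω →ₘ[μ] 𝕜] Ω →ₘ[μ] 𝕜) : E →ₗ[Ω →ₘ[μ] 𝕜] Ω →ₘ[μ] 𝕜 where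
  toFun x := concat hA fun n => f n x
  map_add' x y := by simp only [map_add]; exact concat_add hA _ _
  map_smul' c x := by
    simp only [map_smul, smul_eq_mul, RingHom.id_apply]
    exact concat_const_mul hA _ _

theorem eq_concatLinearMap_iff (hA : IsMeasPartition A) {f : ℕ → E →ₗ[Ω →ₘ[μ] 𝕜] Ω →ₘ[μ] 𝕜}
    {g : E →ₗ[Ω →ₘ[μ] 𝕜] Ω →ₘ[μ] 𝕜} :
    g = concatLinearMap hA f ↔
      ∀ n, L0.ind μ 𝕜 (A n) (hA.meas n) • g = L0.ind μ 𝕜 (A n) (hA.meas n) • f n := by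
  simp only [LinearMap.ext_iff, LinearMap.smul_apply, smul_eq_mul, concatLinearMap,
    LinearMap.coe_mk, AddHom.coe_mk, eq_concat_iff hA]
  exact forall_comm

end L0

theorem module_homs_have_countable_concatenation_property_general
    {Ω : Type*} [MeasurableSpace Ω] (μ : Measure Ω)
    (𝕜 : Type*) [RCLike 𝕜] (E : Type*) [AddCommGroup E] [Module (Ω →ₘ[μ] 𝕜) E]
    (A : ℕ → Set Ω) (hA : IsMeasPartition A)
    (f : ℕ → E →ₗ[Ω →ₘ[μ] 𝕜] Ω →ₘ[μ] 𝕜) :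
    ∃! g : E →ₗ[Ω →ₘ[μ] 𝕜] Ω →ₘ[μ] 𝕜,
      ∀ n, L0.ind μ 𝕜 (A n) (hA.meas n) • g = L0.ind μ 𝕜 (A n) (hA.meas n) • f n :=
  ⟨L0.concatLinearMap hA f, (L0.eq_concatLinearMap_iff hA).1 rfl,
    fun _ hg => (L0.eq_concatLinearMap_iff hA).2 hg⟩

/-- **Example 3.6.** Let `E` be a module over `L⁰(F,𝕜)` satisfying the convention that two
elements agreeing on a countable measurable partition of `Ω` are equal. Then the module
`E^# = {f : E → L⁰(F,𝕜) : f is a module homomorphism}` has the countable concatenation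
property: for every countable measurable partition `{Aₙ}` of `Ω` and every sequence `{fₙ}`
in `E^#`, there is a (necessarily unique) `f ∈ E^#`, the concatenation `Σₙ 1_{Aₙ}·fₙ`,
with `1_{Aₙ}·f = 1_{Aₙ}·fₙ` for every `n`. -/
theorem module_homs_have_countable_concatenation_property
    {Ω : Type*} [MeasurableSpace Ω] (μ : Measure Ω) [IsProbabilityMeasure μ]
    (𝕜 : Type*) [RCLike 𝕜] (E : Type*) [AddCommGroup E] [Module (Ω →ₘ[μ] 𝕜) E]
    (hconv : ∀ (A : ℕ → Set Ω) (hA : IsMeasPartition A) (x y : E),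
      (∀ n, L0.ind μ 𝕜 (A n) (hA.meas n) • x = L0.ind μ 𝕜 (A n) (hA.meas n) • y) → x = y)
    (A : ℕ → Set Ω) (hA : IsMeasPartition A)
    (f : ℕ → E →ₗ[Ω →ₘ[μ] 𝕜] Ω →ₘ[μ] 𝕜) :
    ∃! g : E →ₗ[Ω →ₘ[μ] 𝕜] Ω →ₘ[μ] 𝕜,
      ∀ n, L0.ind μ 𝕜 (A n) (hA.meas n) • g = L0.ind μ 𝕜 (A n) (hA.meas n) • f n :=
  module_homs_have_countable_concatenation_property_general μ 𝕜 E A hA f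
end
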